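/- With 𝓛 as above and with φ_1, φ_2, φ_3 real numbers whose pairwise differences are not multiples of π, the inverse of 𝓛 equals 𝓚·𝓜, where 𝓚 is the diagonal matrix with entries -K_a/(sin(φ_b-φ_a)·sin(φ_c-φ_a)) for {a,b,c} = {1,2,3}, and 𝓜 is the 3×3 matrix whose a-th row is (8 sin φ_b sin φ_c, 4(2 sin φ_b sin φ_c + √-1 sin(φ_b+φ_c)), -2 e^{-√-1(φ_b+φ_c)}) where {b,c} = {1,2,3}\{a}. -/

import Mathlib

open Complex Matrix

/-!
Row `a` of `𝓜` depends only on the two angles `φ_b, φ_c` other than `φ_a`, and its product with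
column `j` of `𝓛` is `-sin (φ_b - φ_j) sin (φ_c - φ_j) / K_j`, which vanishes unless `j = a`.
So `𝓜 𝓛` is diagonal, with entries `-sin (φ_b - φ_a) sin (φ_c - φ_a) / K_a` inverse to those of `𝓚`.
-/

noncomputable def mRow (b c : ℂ) : Fin 3 → ℂ :=
  ![8 * sin b * sin c, 4 * (2 * sin b * sin c + I * sin (b + c)), -2 * exp (-(I * (b + c)))]

noncomputable def lCol (K x : ℂ) : Fin 3 → ℂ :=
  ![-exp (-(2 * I * x)) / (8 * K), -I * exp (-(I * x)) * sin x / (4 * K), sin x ^ 2 / (2 * K)]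

lemma exp_neg_I_mul (x : ℂ) : exp (-(I * x)) = cos x - I * sin x := by
  rw [show -(I * x) = -x * I by ring, exp_mul_I, cos_neg, sin_neg]; ring

lemma mRow_dotProduct_lCol (b c K x : ℂ) :
    mRow b c ⬝ᵥ lCol K x = -(sin (b - x) * sin (c - x)) / K := by
  simp only [mRow, lCol, dotProduct, Fin.sum_univ_three, cons_val_zero, cons_val_one,
    cons_val_two, head_cons, tail_cons]
  rw [show -(2 * I * x) = -(I * x) + -(I * x) by ring, exp_add, exp_neg_I_mul,
    show -(I * (b + c)) = -(I * b) + -(I * c) by ring, exp_add, exp_neg_I_mul, exp_neg_I_mul,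
    sin_add, sin_sub, sin_sub]
  linear_combination (sin x * (cos b * sin c + sin b * cos c) * (sin x * I - cos x) / K) * I_sq

lemma sin_sub_ne_zero_comm {a b : ℂ} (h : sin (a - b) ≠ 0) : sin (b - a) ≠ 0 := by
  rwa [← neg_sub, sin_neg, neg_ne_zero]

lemma of_mul_transpose_of_apply {l m n α : Type*} [Fintype n] [Mul α] [AddCommMonoid α]
    (r : l → n → α) (c : m → n → α) (i : l) (j : m) : (of r * (of c)ᵀ) i j = r i ⬝ᵥ c j :=
  rfl

/-- With `𝓛` as in the paper and `φ₁, φ₂, φ₃` real with pairwise differences having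
nonzero sine, the inverse of `𝓛` equals `𝓚·𝓜`,
where `𝓚 = diag(-K_a/(sin(φ_b-φ_a) sin(φ_c-φ_a)))` and `𝓜` has rows
`(8 sin φ_b sin φ_c, 4(2 sin φ_b sin φ_c + I sin(φ_b+φ_c)), -2 e^{-I(φ_b+φ_c)})`. -/
theorem stmt7 (φ₁ φ₂ φ₃ : ℝ) (K₁ K₂ K₃ : ℂ)
    (hK₁ : K₁ ≠ 0) (hK₂ : K₂ ≠ 0) (hK₃ : K₃ ≠ 0)
    (h12 : Real.sin (φ₁ - φ₂) ≠ 0) (h23 : Real.sin (φ₂ - φ₃) ≠ 0)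
    (h31 : Real.sin (φ₃ - φ₁) ≠ 0)
    (L : Matrix (Fin 3) (Fin 3) ℂ)
    (hL : L = Matrix.of ![
      ![-Complex.exp (-(2 * Complex.I * (φ₁:ℂ))) / (8 * K₁),
        -Complex.exp (-(2 * Complex.I * (φ₂:ℂ))) / (8 * K₂),
        -Complex.exp (-(2 * Complex.I * (φ₃:ℂ))) / (8 * K₃)],
      ![-Complex.I * Complex.exp (-(Complex.I * (φ₁:ℂ))) * (Real.sin φ₁ : ℂ) / (4 * K₁),
        -Complex.I * Complex.exp (-(Complex.I * (φ₂:ℂ))) * (Real.sin φ₂ : ℂ) / (4 * K₂),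
        -Complex.I * Complex.exp (-(Complex.I * (φ₃:ℂ))) * (Real.sin φ₃ : ℂ) / (4 * K₃)],
      ![((Real.sin φ₁ : ℂ))^2 / (2 * K₁),
        ((Real.sin φ₂ : ℂ))^2 / (2 * K₂),
        ((Real.sin φ₃ : ℂ))^2 / (2 * K₃)]])
    (𝓚 : Matrix (Fin 3) (Fin 3) ℂ)
    (h𝓚 : 𝓚 = Matrix.diagonal ![
      -K₁ / ((Real.sin (φ₂ - φ₁) : ℂ) * (Real.sin (φ₃ - φ₁) : ℂ)),
      -K₂ / ((Real.sin (φ₃ - φ₂) : ℂ) * (Real.sin (φ₁ - φ₂) : ℂ)),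
      -K₃ / ((Real.sin (φ₁ - φ₃) : ℂ) * (Real.sin (φ₂ - φ₃) : ℂ))])
    (𝓜 : Matrix (Fin 3) (Fin 3) ℂ)
    (h𝓜 : 𝓜 = Matrix.of ![
      ![8 * (Real.sin φ₂ : ℂ) * (Real.sin φ₃ : ℂ),
        4 * (2 * (Real.sin φ₂ : ℂ) * (Real.sin φ₃ : ℂ) + Complex.I * (Real.sin (φ₂ + φ₃) : ℂ)),
        -2 * Complex.exp (-(Complex.I * ((φ₂ : ℂ) + (φ₃ : ℂ))))],
      ![8 * (Real.sin φ₁ : ℂ) * (Real.sin φ₃ : ℂ),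
        4 * (2 * (Real.sin φ₁ : ℂ) * (Real.sin φ₃ : ℂ) + Complex.I * (Real.sin (φ₃ + φ₁) : ℂ)),
        -2 * Complex.exp (-(Complex.I * ((φ₁ : ℂ) + (φ₃ : ℂ))))],
      ![8 * (Real.sin φ₁ : ℂ) * (Real.sin φ₂ : ℂ),
        4 * (2 * (Real.sin φ₁ : ℂ) * (Real.sin φ₂ : ℂ) + Complex.I * (Real.sin (φ₁ + φ₂) : ℂ)),
        -2 * Complex.exp (-(Complex.I * ((φ₁ : ℂ) + (φ₂ : ℂ))))]]) :
    𝓚 * 𝓜 * L = 1 ∧ L⁻¹ = 𝓚 * 𝓜 := by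
  have hM_rows : 𝓜 = of ![mRow φ₂ φ₃, mRow φ₁ φ₃, mRow φ₁ φ₂] := by
    subst h𝓜
    ext i j
    fin_cases i <;> fin_cases j <;> simp [mRow, add_comm (φ₃ : ℂ)]
  have hL_cols : L = (of ![lCol K₁ φ₁, lCol K₂ φ₂, lCol K₃ φ₃])ᵀ := by
    subst hL
    ext i j
    fin_cases i <;> fin_cases j <;> simp [lCol]
  have hML : 𝓜 * L = diagonal ![-(sin (φ₂ - φ₁) * sin (φ₃ - φ₁)) / K₁,
      -(sin (φ₁ - φ₂) * sin (φ₃ - φ₂)) / K₂, -(sin (φ₁ - φ₃) * sin (φ₂ - φ₃)) / K₃] := by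
    rw [hM_rows, hL_cols]
    ext i j
    fin_cases i <;> fin_cases j <;> simp [of_mul_transpose_of_apply, mRow_dotProduct_lCol]
  have s12 : sin (φ₁ - φ₂ : ℂ) ≠ 0 := by exact_mod_cast h12
  have s23 : sin (φ₂ - φ₃ : ℂ) ≠ 0 := by exact_mod_cast h23
  have s31 : sin (φ₃ - φ₁ : ℂ) ≠ 0 := by exact_mod_cast h31
  have hKML : 𝓚 * 𝓜 * L = 1 := by
    rw [mul_assoc, hML, h𝓚, diagonal_mul_diagonal, diagonal_eq_one]
    ext i
    fin_cases i <;>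
      simp only [Fin.zero_eta, Fin.mk_one, Fin.reduceFinMk, Fin.isValue, cons_val_zero,
        cons_val_one, cons_val, Pi.one_apply, ofReal_sin, ofReal_sub]
    · field_simp [sin_sub_ne_zero_comm s12, s31]
    · field_simp [s12, sin_sub_ne_zero_comm s23]
    · field_simp [sin_sub_ne_zero_comm s31, s23]
  exact ⟨hKML, inv_eq_left_inv hKML⟩
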